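/- Let K be a field of characteristic not 2, c ∈ K^×, and let τ₃ be the K-automorphism of K(x,y,z) of order 2 defined by τ₃: x ↦ y, y ↦ x, z ↦ c/(xyz). Then K(x,y,z)^⟨τ₃⟩ = K(t₁, t₂, t₃), where t₁ = xy/(x + y), t₂ = (xyz + c/z)/(x + y), and t₃ = (xyz − c/z)/(x − y). -/

import Mathlib

/-! Since `τ₃² = 1` and `τ₃ ≠ 1`, Artin's theorem gives `[K(x,y,z) : K(x,y,z)^⟨τ₃⟩] = 2`;
the `tᵢ` are visibly `τ₃`-invariant, so it suffices to show `[K(x,y,z) : L] ≤ 2` for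
`L = K(t₁, t₂, t₃)`. Clearing denominators gives `x + y = 4 t₁ (c - t₃²) / (t₂² - t₃²)` and
`x y = t₁ (x + y)`, so `x` is a root of a quadratic over `L`; and
`t₂ (x + y) + t₃ (x - y) = 2 x y z` recovers `z`, so `K(x,y,z) = L(x)`. -/

open MvPolynomial IntermediateField

section General

variable {K E : Type*} [Field K] [Field E] [Algebra K E]

theorem IntermediateField.mem_fixedField_zpowers_iff {σ : E ≃ₐ[K] E} {a : E} :
    a ∈ fixedField (Subgroup.zpowers σ) ↔ σ a = a := by
  rw [mem_fixedField_iff]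
  exact ⟨fun h => h σ (Subgroup.mem_zpowers σ), fun h _ hg =>
    (Subgroup.zpowers_le (H := MulAction.stabilizer _ a)).mpr h hg⟩

theorem IntermediateField.eq_fixedField_zpowers_of_finrank_le {σ : E ≃ₐ[K] E}
    {L : IntermediateField K E} [FiniteDimensional L E]
    (hle : L ≤ fixedField (Subgroup.zpowers σ)) (hrank : Module.finrank L E ≤ orderOf σ) :
    L = fixedField (Subgroup.zpowers σ) := by
  have hσ : IsOfFinOrder σ := orderOf_pos_iff.1 (Module.finrank_pos.trans_le hrank)
  have : Fintype (Subgroup.zpowers σ) := hσ.finite_zpowers.fintype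
  refine eq_of_le_of_finrank_le' hle (hrank.trans_eq ?_)
  rw [← Nat.card_zpowers, Nat.card_eq_fintype_card]
  exact (FixedPoints.finrank_eq_card (Subgroup.zpowers σ) E).symm

theorem Polynomial.aeval_X_sq_sub_C_mul_X_add_C_eq_zero {R A : Type*} [CommRing R] [CommRing A]
    [Algebra R A] {x y : A} {s p : R} (hs : algebraMap R A s = x + y)
    (hp : algebraMap R A p = x * y) : aeval x (X ^ 2 - C s * X + C p) = 0 := by
  simp only [map_add, map_sub, map_mul, map_pow, aeval_X, aeval_C, hs, hp]
  ring

theorem Polynomial.monic_X_sq_sub_C_mul_X_add_C {R : Type*} [CommRing R] [Nontrivial R]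
    (s p : R) : (X ^ 2 - C s * X + C p).Monic := by
  monicity!

theorem IntermediateField.isIntegral_of_add_mem_of_mul_mem {L : IntermediateField K E} {x y : E}
    (hs : x + y ∈ L) (hp : x * y ∈ L) : IsIntegral L x := by
  refine ⟨_, Polynomial.monic_X_sq_sub_C_mul_X_add_C (⟨x + y, hs⟩ : L) ⟨x * y, hp⟩, ?_⟩
  rw [← Polynomial.aeval_def]
  exact Polynomial.aeval_X_sq_sub_C_mul_X_add_C_eq_zero rfl rfl

theorem IntermediateField.finrank_adjoin_simple_le_two_of_add_mem_of_mul_mem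
    {L : IntermediateField K E} {x y : E} (hs : x + y ∈ L) (hp : x * y ∈ L) :
    Module.finrank L L⟮x⟯ ≤ 2 := by
  have hq := Polynomial.monic_X_sq_sub_C_mul_X_add_C (⟨x + y, hs⟩ : L) ⟨x * y, hp⟩
  rw [adjoin.finrank (isIntegral_of_add_mem_of_mul_mem hs hp)]
  refine (Polynomial.natDegree_le_of_dvd (minpoly.dvd L x ?_) hq.ne_zero).trans ?_
  · exact Polynomial.aeval_X_sq_sub_C_mul_X_add_C_eq_zero rfl rfl
  · compute_degree

end General

section RationalFunctions

variable {σ K F : Type*} [Field K] [Field F] [Algebra (MvPolynomial σ K) F]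
  [IsFractionRing (MvPolynomial σ K) F]

theorem MvPolynomial.algebraMap_ne_zero_of_eval_ne_zero {p : MvPolynomial σ K} (v : σ → K)
    (h : eval v p ≠ 0) : algebraMap (MvPolynomial σ K) F p ≠ 0 :=
  (map_ne_zero_iff _ (IsFractionRing.injective _ F)).2 fun hp => h (by rw [hp, map_zero])

variable [Algebra K F] [IsScalarTower K (MvPolynomial σ K) F]

theorem MvPolynomial.algEquiv_ext_of_isFractionRing {f g : F ≃ₐ[K] F}
    (h : ∀ i, f (algebraMap (MvPolynomial σ K) F (X i)) =
      g (algebraMap (MvPolynomial σ K) F (X i))) : f = g := by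
  have hpoly : (f : F →ₐ[K] F).comp (IsScalarTower.toAlgHom K (MvPolynomial σ K) F) =
      (g : F →ₐ[K] F).comp (IsScalarTower.toAlgHom K (MvPolynomial σ K) F) :=
    MvPolynomial.algHom_ext h
  have hring : (f : F →+* F) = g :=
    IsFractionRing.ringHom_ext (A := MvPolynomial σ K) fun p => DFunLike.congr_fun hpoly p
  exact AlgEquiv.ext fun a => RingHom.congr_fun hring a

theorem IntermediateField.eq_top_of_algebraMap_X_mem {L : IntermediateField K F}
    (h : ∀ i, algebraMap (MvPolynomial σ K) F (X i) ∈ L) : L = ⊤ := by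
  have hpoly : ∀ p, algebraMap (MvPolynomial σ K) F p ∈ L := by
    have : Algebra.adjoin K (Set.range X) ≤
        L.toSubalgebra.comap (IsScalarTower.toAlgHom K (MvPolynomial σ K) F) :=
      Algebra.adjoin_le (by rintro _ ⟨i, rfl⟩; exact h i)
    exact fun p => this (MvPolynomial.adjoin_range_X (R := K) ▸ Algebra.mem_top)
  refine eq_top_iff.2 fun a _ => ?_
  obtain ⟨p, q, -, rfl⟩ := IsFractionRing.div_surjective (A := MvPolynomial σ K) a
  exact div_mem (hpoly p) (hpoly q)

end RationalFunctions

section Tau3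

variable {K F : Type*} [Field K] [Field F] [Algebra K F]

def tau3Invariants (c : K) (x y z : F) : Set F :=
  {x * y / (x + y), (x * y * z + algebraMap K F c / z) / (x + y),
    (x * y * z - algebraMap K F c / z) / (x - y)}

structure Tau3Nondegenerate (c : K) (x y z : F) : Prop where
  two_ne_zero : (2 : F) ≠ 0
  c_ne_zero : algebraMap K F c ≠ 0
  x_ne_zero : x ≠ 0
  y_ne_zero : y ≠ 0
  z_ne_zero : z ≠ 0
  add_ne_zero : x + y ≠ 0
  sub_ne_zero : x - y ≠ 0
  sq_mul_sq_sub_ne_zero : x ^ 2 * z ^ 2 - algebraMap K F c ≠ 0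
  sub_sq_mul_sq_ne_zero : algebraMap K F c - y ^ 2 * z ^ 2 ≠ 0

variable {c : K} {x y z : F} (h : Tau3Nondegenerate c x y z)
include h

theorem Tau3Nondegenerate.apply_eq_self_of_mem_tau3Invariants {τ : F ≃ₐ[K] F} (hτx : τ x = y)
    (hτy : τ y = x) (hτz : τ z = algebraMap K F c / (x * y * z)) {t : F}
    (ht : t ∈ tau3Invariants c x y z) : τ t = t := by
  have hxyz : τ (x * y * z) = algebraMap K F c / z := by
    rw [map_mul, map_mul, hτx, hτy, hτz]
    field_simp [h.x_ne_zero, h.y_ne_zero]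
  have hcz : τ (algebraMap K F c / z) = x * y * z := by
    rw [map_div₀, AlgEquiv.commutes, hτz]
    field_simp [h.c_ne_zero]
  rcases ht with rfl | rfl | rfl
  · rw [map_div₀, map_mul, map_add, hτx, hτy, mul_comm, add_comm]
  · rw [map_div₀, map_add, map_add, hxyz, hcz, hτx, hτy, add_comm, add_comm y]
  · rw [map_div₀, map_sub, map_sub, hxyz, hcz, hτx, hτy, ← neg_sub, ← neg_sub x,
      neg_div_neg_eq]

variable {E : IntermediateField K F} (hE : tau3Invariants c x y z ⊆ E)
include hE

theorem Tau3Nondegenerate.add_mem_of_tau3Invariants_subset : x + y ∈ E := by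
  obtain ⟨h2, -, hx, hy, hz, hxy, hxy', hxz, hyz⟩ := h
  set C := algebraMap K F c
  set t₁ := x * y / (x + y)
  set t₂ := (x * y * z + C / z) / (x + y)
  set t₃ := (x * y * z - C / z) / (x - y)
  have h4 : (4 : F) ≠ 0 := by simpa [show (4 : F) = 2 * 2 by norm_num] using mul_ne_zero h2 h2
  -- This factorization is why `Tau3Nondegenerate` excludes `x²z² = c` and `y²z² = c`.
  have key : t₂ ^ 2 - t₃ ^ 2 =
      4 * x * y * (C - y ^ 2 * z ^ 2) * (x ^ 2 * z ^ 2 - C) /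
        ((x + y) ^ 2 * (x - y) ^ 2 * z ^ 2) := by
    simp only [t₂, t₃]
    field_simp
    ring
  have hsq : t₂ ^ 2 - t₃ ^ 2 ≠ 0 := by
    rw [key]
    positivity
  have hsum : x + y = 4 * t₁ * (C - t₃ ^ 2) / (t₂ ^ 2 - t₃ ^ 2) := by
    rw [eq_div_iff hsq, key]
    simp only [t₁, t₃]
    field_simp
    ring
  have ht₁ : t₁ ∈ E := hE (by simp [tau3Invariants, t₁])
  have ht₂ : t₂ ∈ E := hE (by simp [tau3Invariants, t₂, C])
  have ht₃ : t₃ ∈ E := hE (by simp [tau3Invariants, t₃, C])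
  rw [hsum]
  exact div_mem (mul_mem (mul_mem (ofNat_mem E 4) ht₁) (sub_mem (E.algebraMap_mem c)
    (pow_mem ht₃ 2))) (sub_mem (pow_mem ht₂ 2) (pow_mem ht₃ 2))

theorem Tau3Nondegenerate.mul_mem_of_tau3Invariants_subset : x * y ∈ E := by
  rw [← div_mul_cancel₀ (x * y) h.add_ne_zero]
  exact mul_mem (hE (by simp [tau3Invariants])) (h.add_mem_of_tau3Invariants_subset hE)

theorem Tau3Nondegenerate.mem_of_tau3Invariants_subset (hxE : x ∈ E) (hyE : y ∈ E) :
    z ∈ E := by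
  set t₂ := (x * y * z + algebraMap K F c / z) / (x + y)
  set t₃ := (x * y * z - algebraMap K F c / z) / (x - y)
  have hsum : t₂ * (x + y) + t₃ * (x - y) = 2 * (x * y) * z := by
    rw [div_mul_cancel₀ _ h.add_ne_zero, div_mul_cancel₀ _ h.sub_ne_zero]
    ring
  have hz : z = (t₂ * (x + y) + t₃ * (x - y)) / (2 * (x * y)) := by
    rw [hsum, mul_div_cancel_left₀ _ (mul_ne_zero h.two_ne_zero (mul_ne_zero h.x_ne_zero
      h.y_ne_zero))]
  have ht₂ : t₂ ∈ E := hE (by simp [tau3Invariants, t₂])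
  have ht₃ : t₃ ∈ E := hE (by simp [tau3Invariants, t₃])
  rw [hz]
  exact div_mem (add_mem (mul_mem ht₂ (add_mem hxE hyE)) (mul_mem ht₃ (sub_mem hxE hyE)))
    (mul_mem (ofNat_mem E 2) (mul_mem hxE hyE))

end Tau3

section Tau3RationalFunctions

variable {K F : Type*} [Field K] [Field F] [Algebra K F] [Algebra (MvPolynomial (Fin 3) K) F]
  [IsScalarTower K (MvPolynomial (Fin 3) K) F] [IsFractionRing (MvPolynomial (Fin 3) K) F]
  {c : K} {x y z : F} (hx : x = algebraMap (MvPolynomial (Fin 3) K) F (X 0))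
  (hy : y = algebraMap (MvPolynomial (Fin 3) K) F (X 1))
  (hz : z = algebraMap (MvPolynomial (Fin 3) K) F (X 2))
include hx hy hz

theorem tau3Nondegenerate_of_isFractionRing (h2 : (2 : K) ≠ 0) (hc : c ≠ 0) :
    Tau3Nondegenerate c x y z := by
  have hne (p : MvPolynomial (Fin 3) K) (v : Fin 3 → K) (h : eval v p ≠ 0) :=
    algebraMap_ne_zero_of_eval_ne_zero (F := F) v h
  have hC : algebraMap K F c = algebraMap (MvPolynomial (Fin 3) K) F (C c) := by
    rw [IsScalarTower.algebraMap_apply K (MvPolynomial (Fin 3) K) F, algebraMap_eq]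
  refine ⟨?_, (map_ne_zero _).2 hc, hx ▸ hne (X 0) 1 (by simp), hy ▸ hne (X 1) 1 (by simp),
    hz ▸ hne (X 2) 1 (by simp), ?_, ?_, ?_, ?_⟩
  · rw [← map_ofNat (algebraMap K F)]
    exact (map_ne_zero _).2 h2
  · rw [hx, hy, ← map_add]
    exact hne _ ![1, 0, 0] (by simp)
  · rw [hx, hy, ← map_sub]
    exact hne _ ![1, 0, 0] (by simp)
  · rw [hx, hz, hC, ← map_pow, ← map_pow, ← map_mul, ← map_sub]
    exact hne _ 0 (by simpa)
  · rw [hy, hz, hC, ← map_pow, ← map_pow, ← map_mul, ← map_sub]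
    exact hne _ 0 (by simpa)

theorem tau3_sq_eq_one (h : Tau3Nondegenerate c x y z) {τ : F ≃ₐ[K] F} (hτx : τ x = y)
    (hτy : τ y = x) (hτz : τ z = algebraMap K F c / (x * y * z)) : τ ^ 2 = 1 := by
  refine algEquiv_ext_of_isFractionRing (σ := Fin 3) fun i => ?_
  rw [pow_two, AlgEquiv.mul_apply, AlgEquiv.one_apply]
  match i with
  | 0 => rw [← hx, hτx, hτy]
  | 1 => rw [← hy, hτy, hτx]
  | 2 =>
    rw [← hz, hτz, map_div₀, AlgEquiv.commutes, map_mul, map_mul, hτx, hτy, hτz]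
    field_simp [h.c_ne_zero, h.x_ne_zero, h.y_ne_zero]

theorem Tau3Nondegenerate.adjoin_adjoin_tau3Invariants_eq_top (h : Tau3Nondegenerate c x y z) :
    (adjoin K (tau3Invariants c x y z))⟮x⟯ = ⊤ := by
  set L := adjoin K (tau3Invariants c x y z)
  rw [← restrictScalars_eq_top_iff (K := K)]
  set E := L⟮x⟯.restrictScalars K
  have hLE : tau3Invariants c x y z ⊆ E := fun t ht =>
    L⟮x⟯.algebraMap_mem ⟨t, subset_adjoin K _ ht⟩
  have hxE : x ∈ E := mem_adjoin_simple_self L x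
  have hyE : y ∈ E := by simpa using sub_mem (h.add_mem_of_tau3Invariants_subset hLE) hxE
  have hzE : z ∈ E := h.mem_of_tau3Invariants_subset hLE hxE hyE
  exact eq_top_of_algebraMap_X_mem (σ := Fin 3) fun
    | 0 => hx ▸ hxE
    | 1 => hy ▸ hyE
    | 2 => hz ▸ hzE

end Tau3RationalFunctions

theorem fixed_field_tau3 (K F : Type*) [Field K] [Field F]
    [Algebra K F] [Algebra (MvPolynomial (Fin 3) K) F]
    [IsScalarTower K (MvPolynomial (Fin 3) K) F]
    [IsFractionRing (MvPolynomial (Fin 3) K) F]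
    (h2 : (2 : K) ≠ 0) (c : K) (hc : c ≠ 0)
    (x y z : F)
    (hx : x = algebraMap (MvPolynomial (Fin 3) K) F (X 0))
    (hy : y = algebraMap (MvPolynomial (Fin 3) K) F (X 1))
    (hz : z = algebraMap (MvPolynomial (Fin 3) K) F (X 2))
    (τ : F ≃ₐ[K] F)
    (hτx : τ x = y) (hτy : τ y = x) (hτz : τ z = algebraMap K F c / (x * y * z)) :
    fixedField (Subgroup.zpowers τ) =
      adjoin K {x * y / (x + y),
                (x * y * z + algebraMap K F c / z) / (x + y),
                (x * y * z - algebraMap K F c / z) / (x - y)} := by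
  have h := tau3Nondegenerate_of_isFractionRing hx hy hz h2 hc
  have hord : orderOf τ = 2 := orderOf_eq_prime (tau3_sq_eq_one hx hy hz h hτx hτy hτz)
    fun h1 => h.sub_ne_zero (by rw [h1, AlgEquiv.one_apply] at hτx; rw [hτx, sub_self])
  change _ = adjoin K (tau3Invariants c x y z)
  set L := adjoin K (tau3Invariants c x y z)
  have hsL : x + y ∈ L := h.add_mem_of_tau3Invariants_subset (subset_adjoin K _)
  have hpL : x * y ∈ L := h.mul_mem_of_tau3Invariants_subset (subset_adjoin K _)
  have htop := h.adjoin_adjoin_tau3Invariants_eq_top hx hy hz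
  have : FiniteDimensional L F := by
    have := adjoin.finiteDimensional (isIntegral_of_add_mem_of_mul_mem hsL hpL)
    rw [htop] at this
    exact topEquiv.toLinearEquiv.finiteDimensional
  refine (eq_fixedField_zpowers_of_finrank_le ?_ ?_).symm
  · exact adjoin_le_iff.2 fun t ht => mem_fixedField_zpowers_iff.2
      (h.apply_eq_self_of_mem_tau3Invariants hτx hτy hτz ht)
  · rw [hord, ← finrank_top', ← htop]
    exact finrank_adjoin_simple_le_two_of_add_mem_of_mul_mem hsL hpL
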